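/- arXiv:2508.15580 — 4 statements merged into one kernel-verified Lean document; each statement's English description precedes it below -/
import Mathlib

section
/- For every n ≥ 1, every 1 ≤ n0 < n, and all n-bit strings x and y: if D_n(x,y) < 2^(n−n0), then D_{n0}(P[x,n0], P[y,n0]) ≤ 1. -/
/-- Distance `D_n(x,y) = min(|x-y|, 2^n - |x-y|)` on n-bit strings (as naturals < 2^n). -/
def D (n x y : ℕ) : ℤ := min |(x : ℤ) - (y : ℤ)| (2 ^ n - |(x : ℤ) - (y : ℤ)|)

/-- Wrap-around addition `x +_n c`: the unique natural in [0, 2^n) congruent to x + c mod 2^n. -/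
def wadd (n : ℕ) (x : ℕ) (c : ℤ) : ℕ := (((x : ℤ) + c) % (2 ^ n : ℤ)).toNat

/-- `P[x,k]`: the k-bit prefix of the n-bit string x. -/
def pre (n k x : ℕ) : ℕ := x / 2 ^ (n - k)

/-- `S[x,k]`: the k-bit suffix of x. -/
def suf (k x : ℕ) : ℕ := x % 2 ^ k

/-- Catenation of an m-bit string x with a t-bit string y. -/
def cat (t x y : ℕ) : ℕ := x * 2 ^ t + y

/-!
Write `n = n0 + m` and `B = 2^m`, so that the prefixes are `x / B` and `y / B`, and let `y ≤ x`.
If `x - y < B`, the quotients by `B` differ by at most one. Otherwise the distance is realised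
by wrapping around, `2^n - (x - y) < B`, which forces `y < B` and `x ≥ 2^n - B`: the prefixes are
`0` and `2^n0 - 1`, which are adjacent on the cycle of length `2^n0`.
-/

theorem D_comm (n x y : ℕ) : D n x y = D n y x := by
  simp only [D, abs_sub_comm]

theorem D_le_one_of_le_add_one {k a b : ℕ} (hba : b ≤ a) (hab : a ≤ b + 1) : D k a b ≤ 1 :=
  (min_le_left _ _).trans (abs_le.2 ⟨by omega, by omega⟩)

theorem D_two_pow_sub_one_zero_le_one (k : ℕ) : D k (2 ^ k - 1) 0 ≤ 1 := by
  refine (min_le_right _ _).trans ?_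
  have hk : (1 : ℤ) ≤ 2 ^ k := one_le_pow₀ one_le_two
  rw [Nat.cast_sub Nat.one_le_two_pow, Nat.cast_zero, sub_zero]
  push_cast
  rw [abs_of_nonneg (by linarith)]
  linarith

theorem sub_lt_or_two_pow_lt_of_D_lt {n m x y : ℕ} (hyx : y ≤ x) (h : D n x y < 2 ^ m) :
    x - y < 2 ^ m ∨ 2 ^ n < x - y + 2 ^ m := by
  rw [D, ← Nat.cast_sub hyx, Nat.abs_cast, min_lt_iff] at h
  exact h.imp (by exact_mod_cast ·) fun h ↦ by
    rw [add_comm]; exact_mod_cast sub_lt_iff_lt_add.1 h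

theorem Nat.div_le_div_add_one_of_le_add {x y B : ℕ} (hB : 0 < B) (h : x ≤ y + B) :
    x / B ≤ y / B + 1 := by
  simpa only [Nat.add_div_right _ hB] using Nat.div_le_div_right (c := B) h

theorem Nat.div_eq_zero_and_div_eq_sub_one_of_wrap {A B x y : ℕ} (hx : x < A * B) (hyx : y ≤ x)
    (h : A * B < x - y + B) : y / B = 0 ∧ x / B = A - 1 := by
  have hy : y < B := by omega
  have hxA : x / B < A := Nat.div_lt_of_lt_mul (by rwa [Nat.mul_comm])
  have hAx : (A - 1) * B ≤ x := by rw [Nat.sub_one_mul]; omega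
  exact ⟨Nat.div_eq_of_lt hy, by have := (Nat.le_div_iff_mul_le (by omega)).2 hAx; omega⟩

theorem D_div_two_pow_le_one {k m x y : ℕ} (hx : x < 2 ^ (k + m)) (hy : y < 2 ^ (k + m))
    (h : D (k + m) x y < 2 ^ m) : D k (x / 2 ^ m) (y / 2 ^ m) ≤ 1 := by
  wlog hyx : y ≤ x generalizing x y
  · rw [D_comm] at h ⊢
    exact this hy hx h (by omega)
  rw [pow_add] at hx
  rcases sub_lt_or_two_pow_lt_of_D_lt hyx h with hnear | hwrap
  · exact D_le_one_of_le_add_one (Nat.div_le_div_right hyx)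
      (Nat.div_le_div_add_one_of_le_add (by positivity) (by omega))
  · rw [pow_add] at hwrap
    obtain ⟨hy0, hx1⟩ := Nat.div_eq_zero_and_div_eq_sub_one_of_wrap hx hyx hwrap
    rw [hy0, hx1]
    exact D_two_pow_sub_one_zero_le_one k

theorem stmt_2_general (n n0 : ℕ) (hn0n : n0 < n)
    (x y : ℕ) (hx : x < 2 ^ n) (hy : y < 2 ^ n)
    (h : D n x y < 2 ^ (n - n0)) :
    D n0 (pre n n0 x) (pre n n0 y) ≤ 1 := by
  obtain ⟨m, rfl⟩ := Nat.exists_eq_add_of_le hn0n.le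
  rw [Nat.add_sub_cancel_left] at h
  simpa only [pre, Nat.add_sub_cancel_left] using D_div_two_pow_le_one hx hy h

/-- if `D_n(x,y) < 2^(n-n0)` then the n0-bit prefixes are at distance ≤ 1. -/
theorem stmt_2 (n n0 : ℕ) (hn : 1 ≤ n) (hn0 : 1 ≤ n0) (hn0n : n0 < n)
    (x y : ℕ) (hx : x < 2 ^ n) (hy : y < 2 ^ n)
    (h : D n x y < 2 ^ (n - n0)) :
    D n0 (pre n n0 x) (pre n n0 y) ≤ 1 :=
  stmt_2_general n n0 hn0n x y hx hy h
end

section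
/- Let t ≥ 3 and let A and S be t-bit strings with D_t(S,A) ≤ 1. Then for every integer b with |b| ≤ 1 and every t0 with 2 ≤ t0 ≤ t: S +_t b = A if and only if S[S,t0] +_{t0} b = S[A,t0]. -/
lemma wadd_eq_iff_dvd {n x y : ℕ} {c : ℤ} (hy : y < 2 ^ n) :
    wadd n x c = y ↔ (2 ^ n : ℤ) ∣ x + c - y := by
  have hy' : (y : ℤ) % 2 ^ n = y := Int.emod_eq_of_lt (Int.natCast_nonneg y) (by exact_mod_cast hy)
  have h0 : 0 ≤ ((x : ℤ) + c) % 2 ^ n := Int.emod_nonneg _ (by positivity)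
  rw [dvd_sub_comm, ← Int.modEq_iff_dvd, Int.ModEq, hy', wadd]
  omega

lemma wadd_suf_eq_suf_iff_dvd {k x y : ℕ} {c : ℤ} :
    wadd k (suf k x) c = suf k y ↔ (2 ^ k : ℤ) ∣ x + c - y := by
  rw [wadd_eq_iff_dvd (y := suf k y) (Nat.mod_lt _ (by positivity)), suf, suf]
  have hsplit : (x : ℤ) + c - y = (((x % 2 ^ k : ℕ) : ℤ) + c - (y % 2 ^ k : ℕ)) +
      2 ^ k * ((x / 2 ^ k : ℕ) - (y / 2 ^ k : ℕ)) := by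
    push_cast
    linear_combination Int.emod_add_mul_ediv (y : ℤ) (2 ^ k) - Int.emod_add_mul_ediv (x : ℤ) (2 ^ k)
  rw [hsplit, dvd_add_left (dvd_mul_right _ _)]

lemma exists_abs_le_one_dvd_sub_of_D_le_one {n x y : ℕ} (hx : x < 2 ^ n) (hy : y < 2 ^ n)
    (h : D n x y ≤ 1) : ∃ e : ℤ, |e| ≤ 1 ∧ (2 ^ n : ℤ) ∣ x - y - e := by
  have hx' : (x : ℤ) < 2 ^ n := by exact_mod_cast hx
  have hy' : (y : ℤ) < 2 ^ n := by exact_mod_cast hy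
  rw [D] at h
  generalize (2 : ℤ) ^ n = N at *
  rcases min_le_iff.mp h with hxy | hwrap
  · exact ⟨x - y, hxy, by simp⟩
  · rcases abs_cases ((x : ℤ) - y) with ⟨habs, -⟩ | ⟨habs, -⟩
    · refine ⟨x - y - N, ?_, by simp⟩
      rw [abs_le]; omega
    · refine ⟨x - y + N, ?_, by simp⟩
      rw [abs_le]; omega

theorem stmt_6_general (t : ℕ) (A S : ℕ) (hA : A < 2 ^ t) (hS : S < 2 ^ t)
    (h : D t S A ≤ 1) :
    ∀ b : ℤ, |b| ≤ 1 → ∀ t0 : ℕ, 2 ≤ t0 → t0 ≤ t →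
      (wadd t S b = A ↔ wadd t0 (suf t0 S) b = suf t0 A) := by
  intro b hb t0 ht0 ht0t
  rw [wadd_eq_iff_dvd hA, wadd_suf_eq_suf_iff_dvd]
  have hdvd : (2 ^ t0 : ℤ) ∣ 2 ^ t := pow_dvd_pow 2 ht0t
  refine ⟨hdvd.trans, fun hsuf => ?_⟩
  obtain ⟨e, he, hwrap⟩ := exists_abs_le_one_dvd_sub_of_D_le_one hS hA h
  have hcancel : e + b = 0 := by
    refine Int.eq_zero_of_abs_lt_dvd (m := 2 ^ t0) ?_ ?_
    · have hdiff := dvd_sub hsuf (hdvd.trans hwrap)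
      rwa [show (S : ℤ) + b - A - (S - A - e) = e + b by ring] at hdiff
    · have h4 : (4 : ℤ) ≤ 2 ^ t0 := by
        simpa using pow_le_pow_right₀ (by norm_num : (1 : ℤ) ≤ 2) ht0
      linarith [abs_add_le e b]
  rwa [show (S : ℤ) + b - A = S - A - e by linarith]

/-- for |b| ≤ 1 and 2 ≤ t0 ≤ t, `S +_t b = A` iff `S[S,t0] +_{t0} b = S[A,t0]`. -/
theorem stmt_6 (t : ℕ) (ht : 3 ≤ t) (A S : ℕ) (hA : A < 2 ^ t) (hS : S < 2 ^ t)
    (h : D t S A ≤ 1) :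
    ∀ b : ℤ, |b| ≤ 1 → ∀ t0 : ℕ, 2 ≤ t0 → t0 ≤ t →
      (wadd t S b = A ↔ wadd t0 (suf t0 S) b = suf t0 A) :=
  stmt_6_general t A S hA hS h
end

section
/- Let t ≥ 3, let A and S be t-bit strings with D_t(S,A) ≤ 1, and let y be a 3-bit string with D_3(y, S[A,3]) ≤ 1. Then there exists a unique integer b with |b| ≤ 2 such that S[S,3] +_3 b = y. -/
/-! The distance hypotheses give `S + e ≡ A (mod 2^t)` and `y + f ≡ A (mod 8)` with
`|e|, |f| ≤ 1`; reducing the first modulo 8 shows that `b = e - f` works, and it is the only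
choice since two integers in `[-2, 2]` that agree modulo 8 are equal. -/

lemma exists_abs_le_one_add_modEq_of_D_le_one {n x y : ℕ} (hx : x < 2 ^ n) (hy : y < 2 ^ n)
    (h : D n x y ≤ 1) : ∃ e : ℤ, |e| ≤ 1 ∧ (x : ℤ) + e ≡ y [ZMOD 2 ^ n] := by
  have hx' : (x : ℤ) < 2 ^ n := by exact_mod_cast hx
  have hy' : (y : ℤ) < 2 ^ n := by exact_mod_cast hy
  rcases min_le_iff.mp h with hnear | hwrap
  · exact ⟨y - x, by rwa [abs_sub_comm], by simp [Int.ModEq]⟩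
  -- Otherwise `|x - y| = 2 ^ n - 1`: the two strings are neighbours across the wrap-around.
  · rcases abs_cases ((x : ℤ) - y) with ⟨habs, _⟩ | ⟨habs, _⟩
    · rw [habs] at hwrap
      exact ⟨1, by norm_num, (Int.modEq_iff_dvd.mpr ⟨1, by omega⟩).symm⟩
    · rw [habs] at hwrap
      exact ⟨-1, by norm_num, (Int.modEq_iff_dvd.mpr ⟨-1, by omega⟩).symm⟩

lemma wadd_eq_iff_modEq {n x y : ℕ} {c : ℤ} (hy : y < 2 ^ n) :
    wadd n x c = y ↔ (x : ℤ) + c ≡ y [ZMOD 2 ^ n] := by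
  have hy' : (y : ℤ) < 2 ^ n := by exact_mod_cast hy
  have hnonneg : 0 ≤ ((x : ℤ) + c) % 2 ^ n := Int.emod_nonneg _ (by positivity)
  rw [wadd, Int.ModEq, Int.emod_eq_of_lt (by positivity) hy']
  omega

lemma suf_modEq (k x : ℕ) : ((suf k x : ℕ) : ℤ) ≡ x [ZMOD 2 ^ k] := by
  simpa [suf] using Int.mod_modEq (x : ℤ) (2 ^ k)

lemma Int.ModEq.eq_of_abs_sub_lt {m a b : ℤ} (h : a ≡ b [ZMOD m]) (hab : |b - a| < m) :
    a = b :=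
  (sub_eq_zero.mp (Int.eq_zero_of_abs_lt_dvd h.dvd hab)).symm

/-- there is a unique b with |b| ≤ 2 and `S[S,3] +_3 b = y`. -/
theorem stmt_7 (t : ℕ) (ht : 3 ≤ t) (A S : ℕ) (hA : A < 2 ^ t) (hS : S < 2 ^ t)
    (hSA : D t S A ≤ 1) (y : ℕ) (hy : y < 2 ^ 3) (hyA : D 3 y (suf 3 A) ≤ 1) :
    ∃! b : ℤ, |b| ≤ 2 ∧ wadd 3 (suf 3 S) b = y := by
  obtain ⟨e, he, hSe⟩ := exists_abs_le_one_add_modEq_of_D_le_one hS hA hSA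
  obtain ⟨f, hf, hyf⟩ :=
    exists_abs_le_one_add_modEq_of_D_le_one hy (Nat.mod_lt _ (by positivity)) hyA
  have hSe8 : (S : ℤ) + e ≡ A [ZMOD 2 ^ 3] := hSe.of_dvd (pow_dvd_pow 2 ht)
  have hwitness : ((suf 3 S : ℕ) : ℤ) + (e - f) ≡ y [ZMOD 2 ^ 3] := by
    have := ((suf_modEq 3 S).add_right e).trans
      (hSe8.trans ((suf_modEq 3 A).symm.trans hyf.symm))
    simpa [add_sub_assoc] using this.sub_right f
  refine ⟨e - f, ⟨?_, (wadd_eq_iff_modEq hy).2 hwitness⟩, ?_⟩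
  · linarith [abs_sub e f]
  · rintro b ⟨hb, hwadd⟩
    refine Int.ModEq.eq_of_abs_sub_lt
      (Int.ModEq.add_left_cancel' _ (((wadd_eq_iff_modEq hy).1 hwadd).trans hwitness.symm)) ?_
    linarith [abs_sub (e - f) b, abs_sub e f]
end

section
/- Let n ≥ 1, 1 ≤ n0 < n, let x and y be n-bit strings, and let b be an integer with |b| < 2^(n−n0) such that x +_n b = y. Then there exists an integer b' with |b'| ≤ 1 such that P[x,n0] +_{n0} b' = P[y,n0]. -/
theorem Int.emod_mul_right_ediv_self (a : ℤ) {b : ℤ} (hb : 0 < b) (c : ℤ) :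
    a % (b * c) / b = a / b % c :=
  calc a % (b * c) / b = (a + b * -(c * (a / b / c))) / b := by
        rw [Int.emod_def, Int.ediv_ediv_of_nonneg hb.le]; ring_nf
    _ = a / b - c * (a / b / c) := by rw [Int.add_mul_ediv_left _ _ hb.ne']; ring
    _ = a / b % c := (Int.emod_def _ _).symm

theorem Int.abs_add_ediv_sub_ediv_le_one {d : ℤ} (hd : 0 < d) (x : ℤ) {b : ℤ} (hb : |b| < d) :
    |(x + b) / d - x / d| ≤ 1 := by
  have hdiff : d * ((x + b) / d - x / d) = b - (x + b) % d + x % d := by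
    linarith [Int.emod_add_mul_ediv x d, Int.emod_add_mul_ediv (x + b) d]
  obtain ⟨hb₁, hb₂⟩ := abs_lt.mp hb
  have hr₀ := Int.emod_nonneg x hd.ne'
  have hs₀ := Int.emod_nonneg (x + b) hd.ne'
  have hr₁ := Int.emod_lt_of_pos x hd
  have hs₁ := Int.emod_lt_of_pos (x + b) hd
  have hlt : (x + b) / d - x / d < 2 := lt_of_mul_lt_mul_left (by linarith) hd.le
  have hgt : -2 < (x + b) / d - x / d := lt_of_mul_lt_mul_left (by linarith) hd.le
  rw [abs_le]; omega

theorem natCast_wadd (n x : ℕ) (c : ℤ) : (wadd n x c : ℤ) = (x + c) % 2 ^ n :=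
  Int.toNat_of_nonneg (Int.emod_nonneg _ (by positivity))

theorem natCast_pre (n k x : ℕ) : (pre n k x : ℤ) = x / 2 ^ (n - k) := by
  simp [pre]

theorem pre_wadd {n k : ℕ} (hk : k ≤ n) (x : ℕ) (c : ℤ) :
    pre n k (wadd n x c) = wadd k (pre n k x) ((x + c) / 2 ^ (n - k) - x / 2 ^ (n - k)) := by
  have hn : (2 : ℤ) ^ n = 2 ^ (n - k) * 2 ^ k := by rw [← pow_add, Nat.sub_add_cancel hk]
  zify
  rw [natCast_pre, natCast_wadd, natCast_wadd, natCast_pre, hn,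
    Int.emod_mul_right_ediv_self _ (by positivity)]
  ring_nf

theorem stmt_11_general (n n0 : ℕ) (hn0n : n0 < n)
    (x y : ℕ)
    (b : ℤ) (hb : |b| < 2 ^ (n - n0)) (hxy : wadd n x b = y) :
    ∃ b' : ℤ, |b'| ≤ 1 ∧ wadd n0 (pre n n0 x) b' = pre n n0 y := by
  subst hxy
  exact ⟨_, Int.abs_add_ediv_sub_ediv_le_one (by positivity) x (by exact_mod_cast hb),
    (pre_wadd hn0n.le x b).symm⟩

/-- if `x +_n b = y` with |b| < 2^(n-n0), then the n0-bit prefixes differ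
    by a wrap-around addition of some b' with |b'| ≤ 1. -/
theorem stmt_11 (n n0 : ℕ) (hn : 1 ≤ n) (hn0 : 1 ≤ n0) (hn0n : n0 < n)
    (x y : ℕ) (hx : x < 2 ^ n) (hy : y < 2 ^ n)
    (b : ℤ) (hb : |b| < 2 ^ (n - n0)) (hxy : wadd n x b = y) :
    ∃ b' : ℤ, |b'| ≤ 1 ∧ wadd n0 (pre n n0 x) b' = pre n n0 y :=
  stmt_11_general n n0 hn0n x y b hb hxy
end
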